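/- arXiv:2504.07662 — 3 statements merged into one kernel-verified Lean document; each statement's English description precedes it below -/
import Mathlib

section
/- The functor Υ : R-Mod → ((R-mod)^op, Ab) that sends a left R-module M to the restricted Hom functor Hom_R(-, M) (restricted along the inclusion of finitely presented modules) is fully faithful. -/
open CategoryTheory CategoryTheory.Limits

universe u
variable (R : Type u) [Ring R]

/-- The category of finitely presented left `R`-modules. -/
abbrev fpMod := ObjectProperty.FullSubcategory (fun M : ModuleCat.{u} R => Module.FinitePresentation R M)

/-- The category `((R-mod)ᵒᵖ, Ab)` of contravariant functors on finitely presented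
modules (ambient functor category). -/
abbrev CFun := (fpMod R)ᵒᵖ ⥤ AddCommGrpCat.{u}

/-- The functor `Υ : R-Mod ⟶ ((R-mod)ᵒᵖ, Ab)`, sending `M` to the restricted Hom
functor `Hom_R(-, M)`. -/
noncomputable def Upsilon : ModuleCat.{u} R ⥤ CFun R :=
  preadditiveYoneda ⋙ (Functor.whiskeringLeft _ _ _).obj (ObjectProperty.ι _).op

/-!
The regular module `R` is finitely presented and `Hom(R, M) ≅ M` by evaluation at `1`. So a
transformation `η : Υ M ⟶ Υ M'` yields the map `m ↦ η_R(1 ↦ m)(1)`, which is `R`-linear by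
naturality of `η` along the right multiplications `R → R`; naturality along the maps `R → N`,
`1 ↦ n`, shows that `Υ` sends it back to `η`.
-/

namespace fpMod

abbrev self : fpMod R := ⟨ModuleCat.of R R, inferInstance⟩

end fpMod

noncomputable section

namespace Upsilon

variable {R} {M M' : ModuleCat.{u} R}

abbrev toSpan (m : M) : (fpMod.self R).obj ⟶ M :=
  ModuleCat.ofHom (LinearMap.toSpanSingleton R M m)

lemma toSpan_add (m n : M) : toSpan (m + n) = toSpan m + toSpan n :=
  ModuleCat.hom_ext (LinearMap.toSpanSingleton_add m n)

lemma toSpan_comp (f : M ⟶ M') (m : M) : toSpan m ≫ f = toSpan (f m) :=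
  ModuleCat.hom_ext (LinearMap.comp_toSpanSingleton f.hom m)

lemma toSpan_smul (r : R) (m : M) :
    toSpan (r • m) = toSpan (M := (fpMod.self R).obj) r ≫ toSpan m := by
  rw [toSpan_comp]
  simp

lemma apply_eq_smul_apply_one (g : (fpMod.self R).obj ⟶ M) (r : R) : g r = r • g (1 : R) := by
  rw [← map_smul, smul_eq_mul, mul_one]

/-- The component of `η` at `N`, typed as a map `Hom(N, M) → Hom(N, M')`; the carrier of
`((Upsilon R).obj M).obj (op N)` is `N.obj ⟶ M` only up to unfolding, which blocks coercions. -/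
abbrev homApp (η : (Upsilon R).obj M ⟶ (Upsilon R).obj M') (N : fpMod R) (x : N.obj ⟶ M) :
    N.obj ⟶ M' :=
  η.app (Opposite.op N) x

lemma homApp_comp (η : (Upsilon R).obj M ⟶ (Upsilon R).obj M') {N N' : fpMod R}
    (g : N'.obj ⟶ N.obj) (x : N.obj ⟶ M) :
    homApp η N' (g ≫ x) = g ≫ homApp η N x :=
  ConcreteCategory.congr_hom (η.naturality (ObjectProperty.homMk g).op) x

lemma homApp_add (η : (Upsilon R).obj M ⟶ (Upsilon R).obj M') {N : fpMod R} (x y : N.obj ⟶ M) :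
    homApp η N (x + y) = homApp η N x + homApp η N y :=
  map_add (η.app (Opposite.op N)).hom x y

def preimage (η : (Upsilon R).obj M ⟶ (Upsilon R).obj M') : M ⟶ M' :=
  ModuleCat.ofHom
    { toFun := fun m => homApp η (fpMod.self R) (toSpan m) (1 : R)
      map_add' := fun m n => by
        rw [toSpan_add, homApp_add]
        rfl
      map_smul' := fun r m => by
        rw [RingHom.id_apply, toSpan_smul, homApp_comp, ← apply_eq_smul_apply_one]
        simp }

lemma map_preimage (η : (Upsilon R).obj M ⟶ (Upsilon R).obj M') :
    (Upsilon R).map (preimage η) = η := by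
  ext N : 2
  refine AddCommGrpCat.hom_ext (AddMonoidHom.ext fun (x : N.unop.obj ⟶ M) => ?_)
  change x ≫ preimage η = homApp η N.unop x
  ext n
  change homApp η (fpMod.self R) (toSpan (x n)) (1 : R) = _
  rw [← toSpan_comp, homApp_comp]
  simp

lemma preimage_map (f : M ⟶ M') : preimage ((Upsilon R).map f) = f := by
  ext m
  change (toSpan m ≫ f) (1 : R) = f m
  simp

def fullyFaithful : (Upsilon R).FullyFaithful where
  preimage := preimage
  map_preimage := map_preimage
  preimage_map := preimage_map

end Upsilon

end

/-- the functor `Υ` is fully faithful. -/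
theorem stmt1 : (Upsilon R).Full ∧ (Upsilon R).Faithful :=
  ⟨Upsilon.fullyFaithful.full, Upsilon.fullyFaithful.faithful⟩
end

section
/- A left R-module is pure-projective if and only if it is a direct summand of a direct sum of finitely presented left R-modules. -/
open CategoryTheory CategoryTheory.Limits
universe u
variable (R : Type u) [Ring R]

/-- A surjective linear map is a *pure epimorphism* if every map from a finitely
presented module to the target lifts. -/
def IsPureEpi {N M : Type u} [AddCommGroup N] [Module R N] [AddCommGroup M] [Module R M]
    (g : N →ₗ[R] M) : Prop :=
  Function.Surjective g ∧
    ∀ (P : Type u) [AddCommGroup P] [Module R P], Module.FinitePresentation R P →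
      ∀ φ : P →ₗ[R] M, ∃ ψ : P →ₗ[R] N, g.comp ψ = φ

/-- pure-projective module -/
def IsPureProjective (M : Type u) [AddCommGroup M] [Module R M] : Prop :=
  ∀ (N : Type u) [AddCommGroup N] [Module R N] (g : N →ₗ[R] M),
    IsPureEpi R g → ∃ s : M →ₗ[R] N, g.comp s = LinearMap.id

/-- An injective linear map is a *pure monomorphism* if the induced quotient map is
a pure epimorphism. -/
def IsPureMono {A B : Type u} [AddCommGroup A] [Module R A] [AddCommGroup B] [Module R B]
    (i : A →ₗ[R] B) : Prop :=
  Function.Injective i ∧ IsPureEpi R (LinearMap.range i).mkQ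

/-- pure-injective module -/
def IsPureInjective (M : Type u) [AddCommGroup M] [Module R M] : Prop :=
  ∀ (A B : Type u) [AddCommGroup A] [Module R A] [AddCommGroup B] [Module R B]
    (i : A →ₗ[R] B), IsPureMono R i →
      ∀ f : A →ₗ[R] M, ∃ g : B →ₗ[R] M, g.comp i = f

/-- pure-injectivity for objects of `ModuleCat R` -/
def PI (M : ModuleCat.{u} R) : Prop := IsPureInjective R M

theorem stmt2 (M : Type u) [AddCommGroup M] [Module R M] :
    IsPureProjective R M ↔
      ∃ (ι : Type u) (N : ι → Type u) (_ : ∀ i, AddCommGroup (N i)) (_ : ∀ i, Module R (N i)),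
        (∀ i, Module.FinitePresentation R (N i)) ∧
        ∃ (s : M →ₗ[R] DirectSum ι N) (p : DirectSum ι N →ₗ[R] M),
          p.comp s = LinearMap.id := by
  classical
  constructor
  · intro hPP
    -- index over all (n, fg submodule K of Fin n → R, map from the quotient to M)
    refine ?_
    set ι : Type u := Σ (n : ℕ) (K : {K : Submodule R (Fin n → R) // K.FG}),
      (((Fin n → R) ⧸ K.1) →ₗ[R] M) with hι
    set N : ι → Type u := fun i => (Fin i.1 → R) ⧸ i.2.1.1 with hN
    have hfp : ∀ i : ι, Module.FinitePresentation R (N i) := by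
      intro i
      refine Module.finitePresentation_of_free_of_surjective i.2.1.1.mkQ
        (Submodule.mkQ_surjective _) ?_
      rw [Submodule.ker_mkQ]
      exact i.2.1.2
    set p : DirectSum ι N →ₗ[R] M := DirectSum.toModule R ι M (fun i => i.2.2) with hp
    -- p is a pure epimorphism
    have hkey : ∀ (P : Type u) [AddCommGroup P] [Module R P], Module.FinitePresentation R P →
        ∀ φ : P →ₗ[R] M, ∃ ψ : P →ₗ[R] DirectSum ι N, p.comp ψ = φ := by
      intro P _ _ hPfp φ
      obtain ⟨n, f, hf⟩ := Module.Finite.exists_fin' R P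
      have hker : (LinearMap.ker f).FG := by
        have : Module.FinitePresentation R P := hPfp
        exact Module.FinitePresentation.fg_ker f hf
      let e : ((Fin n → R) ⧸ LinearMap.ker f) ≃ₗ[R] P := f.quotKerEquivOfSurjective hf
      let i : ι := ⟨n, ⟨LinearMap.ker f, hker⟩, φ.comp e.toLinearMap⟩
      refine ⟨(DirectSum.lof R ι N i).comp e.symm.toLinearMap, ?_⟩
      ext x
      simp only [LinearMap.comp_apply, LinearEquiv.coe_coe, hp]
      rw [DirectSum.toModule_lof]
      show φ (e (e.symm x)) = φ x
      rw [e.apply_symm_apply]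
    have hsurj : Function.Surjective p := by
      intro m
      let ℓ : (Fin 1 → R) →ₗ[R] M :=
        { toFun := fun v => v 0 • m
          map_add' := fun a b => by simp [add_smul]
          map_smul' := fun r a => by simp [mul_smul] }
      let i : ι := ⟨1, ⟨⊥, Submodule.fg_bot⟩,
        ℓ.comp ((⊥ : Submodule R (Fin 1 → R)).quotEquivOfEqBot rfl).toLinearMap⟩
      refine ⟨DirectSum.lof R ι N i (Submodule.Quotient.mk (fun _ => (1 : R))), ?_⟩
      rw [hp, DirectSum.toModule_lof]
      show ℓ (((⊥ : Submodule R (Fin 1 → R)).quotEquivOfEqBot rfl)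
        (Submodule.Quotient.mk (fun _ => (1 : R)))) = m
      rw [Submodule.quotEquivOfEqBot_apply_mk]
      show (1 : R) • m = m
      rw [one_smul]
    obtain ⟨s, hs⟩ := hPP (DirectSum ι N) p ⟨hsurj, hkey⟩
    exact ⟨ι, N, inferInstance, inferInstance, hfp, s, p, hs⟩
  · rintro ⟨ι, N, _, _, hfp, s, p, hps⟩
    intro X _ _ g ⟨hgsurj, hglift⟩
    -- lift each component
    choose ψ hψ using fun i => hglift (N i) (hfp i) (p.comp (DirectSum.lof R ι N i))
    let Ψ : DirectSum ι N →ₗ[R] X := DirectSum.toModule R ι X ψ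
    have hgΨ : g.comp Ψ = p := by
      refine DirectSum.linearMap_ext R fun i => ?_
      rw [LinearMap.comp_assoc]
      show g.comp (Ψ.comp (DirectSum.lof R ι N i)) = p.comp (DirectSum.lof R ι N i)
      have : Ψ.comp (DirectSum.lof R ι N i) = ψ i := by
        ext x; exact DirectSum.toModule_lof R i x
      rw [this, hψ]
    refine ⟨Ψ.comp s, ?_⟩
    rw [← LinearMap.comp_assoc, hgΨ, hps]
end

section
/- If in a short exact sequence 0 → (-, M) → G → (-, K) → 0 in ((R-mod)^op, Ab) the outer terms are restricted Hom functors of left R-modules M and K, then the middle term G is also isomorphic to (-, N) for some left R-module N. -/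
open CategoryTheory CategoryTheory.Limits

universe u
variable (R : Type u) [Ring R]

/-!
The value `N := G(R)` of an additive functor `G` is a left `R`-module, `r` acting through `G` of
right multiplication by `r` on `R` (contravariance turns the right action into a left one), and
`x ↦ (a ↦ G(t ↦ t • a)(x))` is a natural map `ν : G ⟶ (-, N)`. Evaluating the sequence at `R`
gives an exact sequence `0 → M → N → K`, and `ν` maps `0 → (-, M) → G → (-, K) → 0` to
`0 → (-, M) → (-, N) → (-, K) → 0` with identities at both ends. The second row is exact on the
left because `Hom` is left exact, and `(-, N) → (-, K)` is epi because `p` factors through it.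
The five lemma makes `ν` an isomorphism.
-/

open Opposite

namespace fpMod

abbrev regular : fpMod R := ⟨ModuleCat.of R R, inferInstanceAs (Module.FinitePresentation R R)⟩

variable {R}

def toSpanSingleton (X : fpMod R) (a : X.obj) : regular R ⟶ X :=
  ObjectProperty.homMk (ModuleCat.ofHom (LinearMap.toSpanSingleton R X.obj a))

lemma hom_ext' {X Y : fpMod R} {f g : X ⟶ Y} (h : ∀ t, f.hom.hom t = g.hom.hom t) : f = g :=
  ObjectProperty.hom_ext _ (ModuleCat.hom_ext (LinearMap.ext h))

lemma toSpanSingleton_comp {X Y : fpMod R} (a : X.obj) (f : X ⟶ Y) :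
    toSpanSingleton X a ≫ f = toSpanSingleton Y (f.hom.hom a) :=
  hom_ext' fun t => f.hom.hom.map_smul t a

lemma toSpanSingleton_add (X : fpMod R) (a b : X.obj) :
    toSpanSingleton X (a + b) = toSpanSingleton X a + toSpanSingleton X b :=
  hom_ext' fun t => smul_add t a b

lemma toSpanSingleton_zero (X : fpMod R) : toSpanSingleton X 0 = 0 :=
  hom_ext' fun t => smul_zero t

lemma toSpanSingleton_one : toSpanSingleton (regular R) 1 = 𝟙 _ :=
  hom_ext' fun t => mul_one t

lemma toSpanSingleton_mul (r s : R) :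
    toSpanSingleton (regular R) (r * s) = toSpanSingleton _ r ≫ toSpanSingleton _ s := by
  rw [toSpanSingleton_comp]
  rfl

end fpMod

open fpMod

namespace Upsilon

instance preservesFiniteLimits : PreservesFiniteLimits (Upsilon R) :=
  preservesFiniteLimits_of_evaluation _ fun X =>
    preservesFiniteLimits_of_natIso
      (Iso.refl (preadditiveCoyoneda.obj (op X.unop.obj)) : _ ≅ Upsilon R ⋙ (evaluation _ _).obj X)

variable {R} {M : ModuleCat.{u} R}

def toSpanSingleton (m : M) : ((Upsilon R).obj M).obj (op (regular R)) :=
  ModuleCat.ofHom (LinearMap.toSpanSingleton R M m)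

lemma toSpanSingleton_injective : Function.Injective (toSpanSingleton (M := M)) := fun m m' h =>
  (one_smul R m).symm.trans ((congrArg (fun g => ModuleCat.Hom.hom g (1 : R)) h).trans
    (one_smul R m'))

lemma toSpanSingleton_hom_one (g : ((Upsilon R).obj M).obj (op (regular R))) :
    toSpanSingleton (g.hom (1 : R)) = g :=
  ModuleCat.hom_ext (LinearMap.ext fun (t : R) => by
    change t • g.hom (1 : R) = g.hom t
    rw [← map_smul, smul_eq_mul, mul_one])

end Upsilon

namespace CFun

section UnderlyingModule

variable {R} (G : CFun R) [G.Additive]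

noncomputable instance regularModule : Module R (G.obj (op (regular R))) where
  smul r x := G.map (toSpanSingleton _ r).op x
  one_smul x := by
    change G.map _ x = x
    rw [toSpanSingleton_one, op_id, G.map_id]
    rfl
  mul_smul r s x := by
    change G.map _ x = G.map _ (G.map _ x)
    rw [toSpanSingleton_mul, op_comp, G.map_comp]
    rfl
  smul_zero _ := map_zero _
  smul_add _ := map_add _
  add_smul r s x := by
    change G.map _ x = G.map _ x + G.map _ x
    rw [toSpanSingleton_add, op_add, G.map_add]
    rfl
  zero_smul x := by
    change G.map _ x = 0
    rw [toSpanSingleton_zero, op_zero, G.map_zero]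
    rfl

noncomputable abbrev underlyingModule : ModuleCat.{u} R :=
  ModuleCat.of R (G.obj (op (regular R)))

lemma smul_def (r : R) (x : underlyingModule G) :
    r • x = G.map (toSpanSingleton _ r).op x := rfl

noncomputable def toUpsilonApp (X : fpMod R) (x : G.obj (op X)) :
    X.obj →ₗ[R] underlyingModule G where
  toFun a := G.map (toSpanSingleton X a).op x
  map_add' a b := by
    rw [toSpanSingleton_add, op_add, G.map_add]
    rfl
  map_smul' r a := by
    rw [RingHom.id_apply, smul_def, ← ConcreteCategory.comp_apply, ← G.map_comp, ← op_comp,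
      toSpanSingleton_comp]
    rfl

noncomputable def toUpsilon : G ⟶ (Upsilon R).obj (underlyingModule G) where
  app X := AddCommGrpCat.ofHom
    { toFun x := ModuleCat.ofHom (toUpsilonApp G X.unop x)
      map_zero' := ModuleCat.hom_ext (LinearMap.ext fun _ => map_zero (G.map _).hom)
      map_add' x y := ModuleCat.hom_ext (LinearMap.ext fun _ => map_add (G.map _).hom x y) }
  naturality X Y f := by
    refine AddCommGrpCat.ext fun x => ModuleCat.hom_ext (LinearMap.ext fun a => ?_)
    change G.map _ (G.map f x) = G.map (toSpanSingleton X.unop (f.unop.hom.hom a)).op x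
    rw [← toSpanSingleton_comp, op_comp, G.map_comp]
    rfl

end UnderlyingModule

variable {R} {G : CFun R} [G.Additive] {M K : ModuleCat.{u} R}
  {i : (Upsilon R).obj M ⟶ G} {p : G ⟶ (Upsilon R).obj K}

variable (i) in
noncomputable def fromUpsilonLinear : M →ₗ[R] underlyingModule G where
  toFun m := i.app _ (Upsilon.toSpanSingleton m)
  map_add' m n := by
    rw [← map_add]
    congr 1
    exact ModuleCat.hom_ext (LinearMap.ext fun (t : R) => smul_add t m n)
  map_smul' r m := by
    rw [RingHom.id_apply, smul_def, ← NatTrans.naturality_apply]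
    congr 1
    exact ModuleCat.hom_ext (LinearMap.ext fun (t : R) => (mul_smul t r m).symm)

variable (p) in
noncomputable def toUpsilonLinear : underlyingModule G →ₗ[R] K where
  toFun n := (p.app _ n).hom (1 : R)
  map_add' n n' := by
    rw [map_add]
    rfl
  map_smul' r n := by
    rw [RingHom.id_apply, smul_def, NatTrans.naturality_apply]
    change (p.app _ n).hom ((1 : R) • r) = r • (p.app _ n).hom (1 : R)
    rw [one_smul, ← map_smul, smul_eq_mul, mul_one]

variable (i) in
lemma comp_toUpsilon :
    i ≫ toUpsilon G = (Upsilon R).map (ModuleCat.ofHom (fromUpsilonLinear i)) := by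
  refine NatTrans.ext (funext fun X => AddCommGrpCat.ext fun g =>
    ModuleCat.hom_ext (LinearMap.ext fun a => ?_))
  change G.map _ (i.app X g) = i.app _ (Upsilon.toSpanSingleton (g.hom a))
  rw [← NatTrans.naturality_apply]
  congr 1
  exact ModuleCat.hom_ext (LinearMap.ext fun (t : R) => g.hom.map_smul t a)

variable (p) in
lemma toUpsilon_comp :
    toUpsilon G ≫ (Upsilon R).map (ModuleCat.ofHom (toUpsilonLinear p)) = p := by
  refine NatTrans.ext (funext fun X => AddCommGrpCat.ext fun x =>
    ModuleCat.hom_ext (LinearMap.ext fun a => ?_))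
  change (p.app (op (regular R)) (G.map _ x)).hom (1 : R) = (p.app X x).hom a
  rw [NatTrans.naturality_apply]
  exact congrArg (p.app X x).hom (one_smul R a)

lemma toUpsilonLinear_fromUpsilonLinear (w : i ≫ p = 0) (m : M) :
    toUpsilonLinear p (fromUpsilonLinear i m) = 0 := by
  change ((i ≫ p).app (op (regular R)) (Upsilon.toSpanSingleton m)).hom (1 : R) = 0
  rw [w]
  rfl

noncomputable def moduleShortComplex (w : i ≫ p = 0) : ShortComplex (ModuleCat.{u} R) :=
  ShortComplex.mk (ModuleCat.ofHom (fromUpsilonLinear i)) (ModuleCat.ofHom (toUpsilonLinear p))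
    (ModuleCat.hom_ext (LinearMap.ext (toUpsilonLinear_fromUpsilonLinear w)))

variable {w : i ≫ p = 0}

lemma mono_moduleShortComplex_f (h : (ShortComplex.mk i p w).ShortExact) :
    Mono (moduleShortComplex w).f := by
  have hR := (h.map_of_exact ((evaluation _ _).obj (op (regular R)))).ab_injective_f
  rw [ModuleCat.mono_iff_injective]
  exact fun m m' hm => Upsilon.toSpanSingleton_injective (hR hm)

lemma moduleShortComplex_exact (h : (ShortComplex.mk i p w).ShortExact) :
    (moduleShortComplex w).Exact := by
  have hR : ∀ n, p.app (op (regular R)) n = 0 → ∃ g, i.app _ g = n :=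
    (ShortComplex.ab_exact_iff _).1 (h.map_of_exact ((evaluation _ _).obj (op (regular R)))).exact
  rw [ShortComplex.moduleCat_exact_iff]
  intro n hn
  obtain ⟨g, rfl⟩ := hR n (by
    rw [← Upsilon.toSpanSingleton_hom_one (p.app _ n)]
    exact (congrArg Upsilon.toSpanSingleton hn).trans
      (ModuleCat.hom_ext (LinearMap.ext fun (t : R) => smul_zero t)))
  exact ⟨g.hom (1 : R), congrArg (i.app _) (Upsilon.toSpanSingleton_hom_one g)⟩

lemma shortExact_moduleShortComplex_map_upsilon (h : (ShortComplex.mk i p w).ShortExact) :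
    ((moduleShortComplex w).map (Upsilon R)).ShortExact := by
  have hf := mono_moduleShortComplex_f h
  have : Epi p := h.epi_g
  have hg : Epi ((Upsilon R).map (ModuleCat.ofHom (toUpsilonLinear p))) :=
    epi_of_epi_fac (toUpsilon_comp p)
  exact
    { exact := (moduleShortComplex_exact h).map_of_mono_of_preservesKernel _ hf inferInstance
      mono_f := (Upsilon R).map_mono _
      epi_g := hg }

variable (w) in
noncomputable def toUpsilonShortComplex :
    ShortComplex.mk i p w ⟶ (moduleShortComplex w).map (Upsilon R) where
  τ₁ := 𝟙 _
  τ₂ := toUpsilon G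
  τ₃ := 𝟙 _
  comm₁₂ := (Category.id_comp _).trans (comp_toUpsilon i).symm
  comm₂₃ := (toUpsilon_comp p).trans (Category.comp_id p).symm

lemma isIso_toUpsilon (h : (ShortComplex.mk i p w).ShortExact) : IsIso (toUpsilon G) :=
  ShortComplex.isIso₂_of_shortExact_of_isIso₁₃' (toUpsilonShortComplex w) h
    (shortExact_moduleShortComplex_map_upsilon h) (IsIso.id _) (IsIso.id _)

end CFun

/-- in a short exact sequence `0 → (-, M) → G → (-, K) → 0` in
`((R-mod)ᵒᵖ, Ab)` the middle term is again of the form `(-, N)`. -/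
theorem stmt6 (M K : ModuleCat.{u} R) (G : CFun R) (hG : G.Additive)
    (i : (Upsilon R).obj M ⟶ G) (p : G ⟶ (Upsilon R).obj K) (w : i ≫ p = 0)
    (h : (ShortComplex.mk i p w).ShortExact) :
    ∃ N : ModuleCat.{u} R, Nonempty (G ≅ (Upsilon R).obj N) :=
  have := CFun.isIso_toUpsilon h
  ⟨_, ⟨asIso (CFun.toUpsilon G)⟩⟩
end
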